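/- arXiv:1807.00393 — 2 statements merged into one kernel-verified Lean document; each statement's English description precedes it below -/
import Mathlib

section
/- Let f_1, …, f_K : ℝ^d → ℝ and φ_1, …, φ_K : ℝ^d → ℝ be continuously differentiable, let x_1, …, x_n ∈ ℝ^d and y_1, …, y_m ∈ ℝ^d, and for α, β ∈ ℝ^K define T_α(x) = x + Σ_{l=1}^K α_l ∇φ_l(x) and L(α, β) = (1/n) Σ_{i=1}^n Σ_{k=1}^K β_k f_k(T_α(x_i)) − (1/m) Σ_{j=1}^m exp(Σ_{k=1}^K β_k f_k(y_j)). Suppose (α, β) is a critical point of L (all partial derivatives in α and β vanish) and the matrix C(α) ∈ ℝ^{K×K} with entries C(α)_{l k} = (1/n) Σ_{i=1}^n ∇φ_l(x_i) · ∇f_k(T_α(x_i)) is nonsingular. Then β = 0 and the transported sample matches the target sample on all features: for every k ∈ {1, …, K}, (1/n) Σ_{i=1}^n f_k(T_α(x_i)) = (1/m) Σ_{j=1}^m f_k(y_j). -/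
open scoped BigOperators

/-- The parametrized transport map `T_α(x) = x + ∑ l, α l • ∇φ_l(x)`. -/
noncomputable def Tmap {d K : ℕ} (φ : Fin K → EuclideanSpace ℝ (Fin d) → ℝ)
    (α : Fin K → ℝ) (z : EuclideanSpace ℝ (Fin d)) : EuclideanSpace ℝ (Fin d) :=
  z + ∑ l, α l • gradient (φ l) z

/-- The sample-based Lagrangian
`L(α, β) = (1/n) ∑ i ∑ k, β k * f k (T_α xᵢ) - (1/m) ∑ j, exp (∑ k, β k * f k (y j))`. -/
noncomputable def Lag {d K n m : ℕ}
    (f φ : Fin K → EuclideanSpace ℝ (Fin d) → ℝ)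
    (x : Fin n → EuclideanSpace ℝ (Fin d)) (y : Fin m → EuclideanSpace ℝ (Fin d))
    (α β : Fin K → ℝ) : ℝ :=
  (1 / (n : ℝ)) * ∑ i, ∑ k, β k * f k (Tmap φ α (x i))
    - (1 / (m : ℝ)) * ∑ j, Real.exp (∑ k, β k * f k (y j))

/-- The matrix `C(α)` with entries
`C(α)_{l k} = (1/n) ∑ i, ⟪∇φ_l(xᵢ), ∇f_k(T_α(xᵢ))⟫`. -/
noncomputable def Cmat {d K n : ℕ}
    (f φ : Fin K → EuclideanSpace ℝ (Fin d) → ℝ)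
    (x : Fin n → EuclideanSpace ℝ (Fin d)) (α : Fin K → ℝ) :
    Matrix (Fin K) (Fin K) ℝ :=
  Matrix.of fun l k =>
    (1 / (n : ℝ)) * ∑ i, (inner ℝ (gradient (φ l) (x i)) (gradient (f k) (Tmap φ α (x i))) : ℝ)

/-! The `α`-partial derivatives of `L` at `(α, β)` are the entries of `C(α) β`, so a
nonsingular `C(α)` forces `β = 0`. At `β = 0` every exponential weight `exp (∑ k, β k f_k (y j))`
equals `1`, and the `β`-partial derivatives become the differences of the feature means. -/

open Finset Matrix

lemma hasFDerivAt_sum_mul {ι : Type*} [Fintype ι] (c : ι → ℝ) (b : ι → ℝ) :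
    HasFDerivAt (fun b : ι → ℝ => ∑ k, b k * c k)
      (LinearMap.toContinuousLinearMap (Fintype.linearCombination ℝ c)) b := by
  convert (LinearMap.toContinuousLinearMap (Fintype.linearCombination ℝ c)).hasFDerivAt using 1
  funext b
  simp [Fintype.linearCombination_apply]

section Lagrangian

variable {d K n m : ℕ} (φ : Fin K → EuclideanSpace ℝ (Fin d) → ℝ)
  (x : Fin n → EuclideanSpace ℝ (Fin d)) (y : Fin m → EuclideanSpace ℝ (Fin d))

lemma hasFDerivAt_Tmap (α : Fin K → ℝ) (z : EuclideanSpace ℝ (Fin d)) :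
    HasFDerivAt (fun a => Tmap φ a z)
      (LinearMap.toContinuousLinearMap
        (Fintype.linearCombination ℝ fun l => gradient (φ l) z)) α := by
  have hT : (fun a => Tmap φ a z)
      = fun a => z + Fintype.linearCombination ℝ (fun l => gradient (φ l) z) a := by
    funext a
    rw [Fintype.linearCombination_apply, Tmap]
  rw [hT]
  exact ((LinearMap.toContinuousLinearMap _).hasFDerivAt).const_add z

lemma fderiv_Lag_fst_apply_single {f : Fin K → EuclideanSpace ℝ (Fin d) → ℝ}
    (hf : ∀ k, Differentiable ℝ (f k)) (α β : Fin K → ℝ) (l : Fin K) :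
    fderiv ℝ (fun a => Lag f φ x y a β) α (Pi.single l 1) = (Cmat f φ x α *ᵥ β) l := by
  set D := fun i k => (fderiv ℝ (f k) (Tmap φ α (x i))).comp
    (LinearMap.toContinuousLinearMap
      (Fintype.linearCombination ℝ fun l => gradient (φ l) (x i)))
  have hterm : ∀ i k, HasFDerivAt (fun a => f k (Tmap φ a (x i))) (D i k) α := fun i k =>
    ((hf k) _).hasFDerivAt.comp α (hasFDerivAt_Tmap φ α (x i))
  have hLag : HasFDerivAt (fun a => Lag f φ x y a β)
      ((1 / (n : ℝ)) • ∑ i, ∑ k, β k • D i k) α :=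
    ((HasFDerivAt.fun_sum fun i _ => HasFDerivAt.fun_sum fun k _ =>
      (hterm i k).const_mul (β k)).const_mul _).sub_const _
  have hD : ∀ i k, D i k (Pi.single l 1)
      = inner ℝ (gradient (φ l) (x i)) (gradient (f k) (Tmap φ α (x i))) := by
    intro i k
    simp [D, Fintype.linearCombination_apply_single]
  rw [hLag.fderiv]
  simp only [_root_.smul_apply, _root_.sum_apply, smul_eq_mul, hD,
    mulVec, dotProduct, Cmat, of_apply, mul_sum, sum_mul]
  rw [sum_comm]
  exact sum_congr rfl fun k _ => sum_congr rfl fun i _ => by ring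

lemma fderiv_Lag_snd_apply_single (f : Fin K → EuclideanSpace ℝ (Fin d) → ℝ)
    (α β : Fin K → ℝ) (k : Fin K) :
    fderiv ℝ (fun b => Lag f φ x y α b) β (Pi.single k 1)
      = (1 / (n : ℝ)) * ∑ i, f k (Tmap φ α (x i))
        - (1 / (m : ℝ)) * ∑ j, Real.exp (∑ k', β k' * f k' (y j)) * f k (y j) := by
  have hLag : HasFDerivAt (fun b => Lag f φ x y α b)
      ((1 / (n : ℝ)) • ∑ i, LinearMap.toContinuousLinearMap
          (Fintype.linearCombination ℝ fun k' => f k' (Tmap φ α (x i)))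
        - (1 / (m : ℝ)) • ∑ j, Real.exp (∑ k', β k' * f k' (y j)) •
          LinearMap.toContinuousLinearMap (Fintype.linearCombination ℝ fun k' => f k' (y j))) β :=
    ((HasFDerivAt.fun_sum fun i _ =>
      hasFDerivAt_sum_mul (fun k' => f k' (Tmap φ α (x i))) β).const_mul (1 / (n : ℝ))).sub
    ((HasFDerivAt.fun_sum fun j _ =>
      (hasFDerivAt_sum_mul (fun k' => f k' (y j)) β).exp).const_mul (1 / (m : ℝ)))
  rw [hLag.fderiv]
  simp [Fintype.linearCombination_apply_single, mul_comm]

end Lagrangian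

theorem critical_point_feature_matching_general {d K n m : ℕ}
    (f φ : Fin K → EuclideanSpace ℝ (Fin d) → ℝ)
    (hf : ∀ k, ContDiff ℝ 1 (f k))
    (x : Fin n → EuclideanSpace ℝ (Fin d)) (y : Fin m → EuclideanSpace ℝ (Fin d))
    (α β : Fin K → ℝ)
    (hcritα : ∀ l : Fin K,
      fderiv ℝ (fun a => Lag f φ x y a β) α (Pi.single l 1) = 0)
    (hcritβ : ∀ k : Fin K,
      fderiv ℝ (fun b => Lag f φ x y α b) β (Pi.single k 1) = 0)
    (hC : (Cmat f φ x α).det ≠ 0) :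
    β = 0 ∧
    ∀ k : Fin K,
      (1 / (n : ℝ)) * ∑ i, f k (Tmap φ α (x i))
        = (1 / (m : ℝ)) * ∑ j, f k (y j) := by
  have hf' : ∀ k, Differentiable ℝ (f k) := fun k => (hf k).differentiable one_ne_zero
  have hβ : β = 0 := Matrix.eq_zero_of_mulVec_eq_zero hC <| funext fun l => by
    rw [← fderiv_Lag_fst_apply_single φ x y hf' α β l, hcritα l, Pi.zero_apply]
  subst hβ
  refine ⟨rfl, fun k => ?_⟩
  have h := hcritβ k
  rw [fderiv_Lag_snd_apply_single] at h
  simpa [sub_eq_zero] using h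

/-- If `(α, β)` is a critical point of the Lagrangian (all partial derivatives in `α`
and `β` vanish) and the matrix `C(α)` is nonsingular, then `β = 0` and the transported
sample matches the target sample on all features:
`(1/n) ∑ i, f k (T_α xᵢ) = (1/m) ∑ j, f k (y j)` for every `k`. -/
theorem critical_point_feature_matching {d K n m : ℕ}
    (f φ : Fin K → EuclideanSpace ℝ (Fin d) → ℝ)
    (hf : ∀ k, ContDiff ℝ 1 (f k)) (hφ : ∀ l, ContDiff ℝ 1 (φ l))
    (x : Fin n → EuclideanSpace ℝ (Fin d)) (y : Fin m → EuclideanSpace ℝ (Fin d))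
    (α β : Fin K → ℝ)
    (hcritα : ∀ l : Fin K,
      fderiv ℝ (fun a => Lag f φ x y a β) α (Pi.single l 1) = 0)
    (hcritβ : ∀ k : Fin K,
      fderiv ℝ (fun b => Lag f φ x y α b) β (Pi.single k 1) = 0)
    (hC : (Cmat f φ x α).det ≠ 0) :
    β = 0 ∧
    ∀ k : Fin K,
      (1 / (n : ℝ)) * ∑ i, f k (Tmap φ α (x i))
        = (1 / (m : ℝ)) * ∑ j, f k (y j) :=
  critical_point_feature_matching_general f φ hf x y α β hcritα hcritβ hC
end

section
/- Let μ and ν be probability measures on ℝ^d with μ absolutely continuous with respect to Lebesgue measure, and suppose there exists a convex, everywhere differentiable φ₀ : ℝ^d → ℝ with (∇φ₀)_#μ = ν. Let Φ be the class of convex, everywhere differentiable functions φ : ℝ^d → ℝ and let G be the class of bounded Borel measurable functions g : ℝ^d → ℝ, and define the Lagrangian L[φ, g] = ∫ g(∇φ(x)) dμ(x) − ∫ e^{g(y)} dν(y). Then there is no duality gap: inf_{φ ∈ Φ} sup_{g ∈ G} L[φ, g] = sup_{g ∈ G} inf_{φ ∈ Φ} L[φ, g] = −1, with the primal infimum attained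 at φ₀ and the dual supremum attained at g ≡ 0. -/
open MeasureTheory

/-! `(φ₀, 0)` is a saddle point of `L` with value `-1`. Since `μ` and `ν` are probability
measures, `L[φ, 0] = -1` for every `φ`; transporting along `∇φ₀` turns `L[φ₀, g]` into
`∫ (g - e^g) dν`, which is at most `-1` because `e^t ≥ 1 + t`. -/

theorem iInf_iSup_eq_iSup_iInf_of_saddle {α ι κ : Type*} [CompleteLattice α]
    {f : ι → κ → α} {c : α} (i₀ : ι) (j₀ : κ)
    (hj₀ : ∀ i, c ≤ f i j₀) (hi₀ : ∀ j, f i₀ j ≤ c) :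
    (⨅ i, ⨆ j, f i j) = c ∧ (⨆ j, ⨅ i, f i j) = c ∧
      (⨆ j, f i₀ j) = c ∧ (⨅ i, f i j₀) = c := by
  have hsup : (⨆ j, f i₀ j) = c := le_antisymm (iSup_le hi₀) (le_iSup_of_le j₀ (hj₀ i₀))
  have hinf : (⨅ i, f i j₀) = c := le_antisymm (iInf_le_of_le i₀ (hi₀ j₀)) (le_iInf hj₀)
  refine ⟨le_antisymm ?_ ?_, le_antisymm ?_ ?_, hsup, hinf⟩
  · exact iInf_le_of_le i₀ hsup.le
  · exact le_iInf fun i => le_iSup_of_le j₀ (hj₀ i)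
  · exact iSup_le fun j => iInf_le_of_le i₀ (hi₀ j)
  · exact le_iSup_of_le j₀ hinf.ge

theorem measurable_gradient {F : Type*} [NormedAddCommGroup F] [InnerProductSpace ℝ F]
    [CompleteSpace F] [MeasurableSpace F] [BorelSpace F] [SecondCountableTopology F]
    (f : F → ℝ) : Measurable (gradient f) :=
  (InnerProductSpace.toDual ℝ F).symm.continuous.measurable.comp (measurable_fderiv ℝ f)

section Lagrangian

variable {β : Type*} [MeasurableSpace β] {ν : Measure β} [IsProbabilityMeasure ν]

theorem integral_sub_integral_exp_le_neg_one {g : β → ℝ} (hg : Integrable g ν)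
    (hexp : Integrable (fun y => Real.exp (g y)) ν) :
    ∫ y, g y ∂ν - ∫ y, Real.exp (g y) ∂ν ≤ -1 :=
  calc ∫ y, g y ∂ν - ∫ y, Real.exp (g y) ∂ν = ∫ y, (g y - Real.exp (g y)) ∂ν :=
        (integral_sub hg hexp).symm
    _ ≤ ∫ _, (-1 : ℝ) ∂ν :=
        integral_mono (hg.sub hexp) (integrable_const _) fun y => by
          linarith [Real.add_one_le_exp (g y)]
    _ = -1 := by simp

theorem integral_sub_integral_exp_le_neg_one_of_abs_le {g : β → ℝ} (hg : Measurable g) {C : ℝ}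
    (hC : ∀ y, |g y| ≤ C) :
    ∫ y, g y ∂ν - ∫ y, Real.exp (g y) ∂ν ≤ -1 := by
  have hbound : ∀ y, g y ∈ Set.Icc (-C) C := fun y => abs_le.mp (hC y)
  refine integral_sub_integral_exp_le_neg_one
    (.of_mem_Icc (-C) C hg.aemeasurable (ae_of_all _ hbound))
    (.of_mem_Icc (Real.exp (-C)) (Real.exp C) (Real.measurable_exp.comp hg).aemeasurable
      (ae_of_all _ fun y => ?_))
  exact ⟨Real.exp_le_exp.mpr (hbound y).1, Real.exp_le_exp.mpr (hbound y).2⟩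

end Lagrangian

theorem no_duality_gap_general {d : ℕ}
    (μ ν : Measure (EuclideanSpace ℝ (Fin d)))
    [IsProbabilityMeasure μ] [IsProbabilityMeasure ν]
    (φ₀ : EuclideanSpace ℝ (Fin d) → ℝ)
    (h0conv : ConvexOn ℝ Set.univ φ₀) (h0diff : Differentiable ℝ φ₀)
    (hpush : Measure.map (gradient φ₀) μ = ν) :
    let Φ := {φ : EuclideanSpace ℝ (Fin d) → ℝ //
      ConvexOn ℝ Set.univ φ ∧ Differentiable ℝ φ}
    let G := {g : EuclideanSpace ℝ (Fin d) → ℝ //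
      Measurable g ∧ ∃ C, ∀ y, |g y| ≤ C}
    let L : (EuclideanSpace ℝ (Fin d) → ℝ) → (EuclideanSpace ℝ (Fin d) → ℝ) → ℝ :=
      fun φ g => ∫ x, g (gradient φ x) ∂μ - ∫ y, Real.exp (g y) ∂ν
    (⨅ φ : Φ, ⨆ g : G, ((L φ.1 g.1 : ℝ) : EReal)) = -1 ∧
    (⨆ g : G, ⨅ φ : Φ, ((L φ.1 g.1 : ℝ) : EReal)) = -1 ∧
    (⨆ g : G, ((L φ₀ g.1 : ℝ) : EReal)) = -1 ∧
    (⨅ φ : Φ, ((L φ.1 (fun _ => 0) : ℝ) : EReal)) = -1 := by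
  intro Φ G L
  have hL_zero (φ : EuclideanSpace ℝ (Fin d) → ℝ) : ((L φ fun _ => 0 : ℝ) : EReal) = -1 := by
    simp [L]
  have hL_φ₀ (g : G) : ((L φ₀ g.1 : ℝ) : EReal) ≤ -1 := by
    obtain ⟨g, hg, C, hC⟩ := g
    have htransport : ∫ x, g (gradient φ₀ x) ∂μ = ∫ y, g y ∂ν := by
      rw [← hpush, integral_map (measurable_gradient φ₀).aemeasurable hg.aestronglyMeasurable]
    have hL : L φ₀ g ≤ -1 := by
      simpa only [L, htransport] using integral_sub_integral_exp_le_neg_one_of_abs_le hg hC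
    simpa using EReal.coe_le_coe_iff.mpr hL
  exact iInf_iSup_eq_iSup_iInf_of_saddle
    (f := fun (φ : Φ) (g : G) => ((L φ.1 g.1 : ℝ) : EReal))
    ⟨φ₀, h0conv, h0diff⟩ ⟨fun _ => 0, measurable_const, 0, by simp⟩
    (fun φ => (hL_zero φ.1).ge) hL_φ₀

/-- No duality gap.  Let `μ, ν` be probability measures on `ℝ^d` with `μ` absolutely
continuous with respect to Lebesgue measure, and suppose a convex, everywhere
differentiable `φ₀` satisfies `(∇φ₀)_# μ = ν`.  With
`L[φ, g] = ∫ g (∇φ x) dμ - ∫ e^(g y) dν`, `Φ` the convex differentiable potentials and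
`G` the bounded Borel measurable functions, one has
`⨅_{φ ∈ Φ} ⨆_{g ∈ G} L[φ, g] = ⨆_{g ∈ G} ⨅_{φ ∈ Φ} L[φ, g] = -1`, with the primal
infimum attained at `φ₀` and the dual supremum attained at `g ≡ 0`. -/
theorem no_duality_gap {d : ℕ}
    (μ ν : Measure (EuclideanSpace ℝ (Fin d)))
    [IsProbabilityMeasure μ] [IsProbabilityMeasure ν]
    (hμ : μ ≪ volume)
    (φ₀ : EuclideanSpace ℝ (Fin d) → ℝ)
    (h0conv : ConvexOn ℝ Set.univ φ₀) (h0diff : Differentiable ℝ φ₀)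
    (hpush : Measure.map (gradient φ₀) μ = ν) :
    let Φ := {φ : EuclideanSpace ℝ (Fin d) → ℝ //
      ConvexOn ℝ Set.univ φ ∧ Differentiable ℝ φ}
    let G := {g : EuclideanSpace ℝ (Fin d) → ℝ //
      Measurable g ∧ ∃ C, ∀ y, |g y| ≤ C}
    let L : (EuclideanSpace ℝ (Fin d) → ℝ) → (EuclideanSpace ℝ (Fin d) → ℝ) → ℝ :=
      fun φ g => ∫ x, g (gradient φ x) ∂μ - ∫ y, Real.exp (g y) ∂ν
    (⨅ φ : Φ, ⨆ g : G, ((L φ.1 g.1 : ℝ) : EReal)) = -1 ∧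
    (⨆ g : G, ⨅ φ : Φ, ((L φ.1 g.1 : ℝ) : EReal)) = -1 ∧
    (⨆ g : G, ((L φ₀ g.1 : ℝ) : EReal)) = -1 ∧
    (⨅ φ : Φ, ((L φ.1 (fun _ => 0) : ℝ) : EReal)) = -1 :=
  no_duality_gap_general μ ν φ₀ h0conv h0diff hpush
end
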